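/- Let p be a prime and k a commutative ring of characteristic p. Then the operator F = ∑_i x_i²·∂_i on k[x_0, …, x_{n-1}] satisfies F^p = 0, i.e. its p-fold composition with itself is the zero operator. (This nilpotence gives the p-DG structure on link homology coming from the action of f in characteristic p.) -/

import Mathlib

/-!
Write `F = ∑ᵢ Fᵢ` with `Fᵢ = xᵢ²·∂ᵢ`. On monomials `Fᵢ` only raises the exponent of `xᵢ`, so the
`Fᵢ` commute and `Fᵢ^t x^m = m_i (m_i + 1) ⋯ (m_i + t - 1) · x^(m + t eᵢ)`. For `t = p` the
coefficient is a product of `p` consecutive integers, hence divisible by `p!` and so by `p`; thus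
`Fᵢ^p = 0`. Since the `Fᵢ` commute and `End k (k[x])` has characteristic `p`, the Frobenius is
additive on them and `F^p = ∑ᵢ Fᵢ^p = 0`.
-/

open MvPolynomial

/-- The sl₂-operator `F = ∑ᵢ xᵢ²·∂ᵢ` on `k[x₀, …, x_{n-1}]`. -/
noncomputable def opF (k : Type*) [CommRing k] (n : ℕ) :
    Module.End k (MvPolynomial (Fin n) k) :=
  ∑ i : Fin n, (LinearMap.mulLeft k (X i ^ 2)) ∘ₗ (pderiv i).toLinearMap

theorem Finset.sum_pow_expChar_of_commute {ι R : Type*} [Semiring R] (p : ℕ) [ExpChar R p]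
    (s : Finset ι) (f : ι → R) (hf : ∀ i ∈ s, ∀ j ∈ s, Commute (f i) (f j)) :
    (∑ i ∈ s, f i) ^ p = ∑ i ∈ s, f i ^ p := by
  classical
  induction s using Finset.induction with
  | empty => simp [zero_pow (expChar_ne_zero R p)]
  | insert a s ha ih =>
    have hcomm : Commute (f a) (∑ i ∈ s, f i) :=
      .sum_right _ _ _ fun j hj ↦ hf a (mem_insert_self a s) j (mem_insert_of_mem hj)
    rw [sum_insert ha, sum_insert ha, add_pow_expChar_of_commute p hcomm,
      ih fun i hi j hj ↦ hf i (mem_insert_of_mem hi) j (mem_insert_of_mem hj)]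

section opFSummand

variable {k : Type*} [CommRing k] {n : ℕ}

variable (k) in
noncomputable def opFSummand (i : Fin n) : Module.End k (MvPolynomial (Fin n) k) :=
  LinearMap.mulLeft k (X i ^ 2) ∘ₗ (pderiv i).toLinearMap

theorem opF_eq_sum_opFSummand : opF k n = ∑ i, opFSummand k i := rfl

theorem opFSummand_monomial (i : Fin n) (m : Fin n →₀ ℕ) (c : k) :
    opFSummand k i (monomial m c) = (m i : k) • monomial (m + Finsupp.single i 1) c := by
  simp only [opFSummand, LinearMap.comp_apply, Derivation.coeFn_coe, pderiv_monomial,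
    LinearMap.mulLeft_apply, X_pow_eq_monomial, monomial_mul, one_mul]
  rcases Nat.eq_zero_or_pos (m i) with h | h
  · simp [h]
  · have hm : Finsupp.single i 2 + (m - Finsupp.single i 1) = m + Finsupp.single i 1 := by
      ext j
      rcases eq_or_ne j i with rfl | hj
      · simp only [Finsupp.add_apply, Finsupp.single_eq_same, Finsupp.tsub_apply]
        omega
      · simp [hj.symm]
    rw [hm, smul_monomial, smul_eq_mul, mul_comm]

theorem opFSummand_pow_monomial (i : Fin n) (t : ℕ) (m : Fin n →₀ ℕ) (c : k) :
    (opFSummand k i ^ t) (monomial m c) =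
      ((m i).ascFactorial t : k) • monomial (m + Finsupp.single i t) c := by
  induction t with
  | zero => simp
  | succ t ih =>
    rw [pow_succ', Module.End.mul_apply, ih, map_smul, opFSummand_monomial, smul_smul,
      Finsupp.single_add, ← add_assoc, Nat.ascFactorial_succ]
    simp [mul_comm]

theorem opFSummand_pow_eq_zero {p : ℕ} [CharP k p] (hp : p ≠ 0) (i : Fin n) :
    opFSummand k i ^ p = 0 := by
  refine MvPolynomial.linearMap_ext fun m ↦ LinearMap.ext fun c ↦ ?_
  have hdvd : p ∣ (m i).ascFactorial p :=
    (Nat.dvd_factorial (Nat.pos_of_ne_zero hp) le_rfl).trans (Nat.factorial_dvd_ascFactorial _ _)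
  simp [opFSummand_pow_monomial, (CharP.cast_eq_zero_iff k p _).mpr hdvd]

theorem opFSummand_commute (i j : Fin n) : Commute (opFSummand k i) (opFSummand k j) := by
  refine MvPolynomial.linearMap_ext fun m ↦ LinearMap.ext fun c ↦ ?_
  rcases eq_or_ne i j with rfl | hij
  · rfl
  · simp only [LinearMap.comp_apply, Module.End.mul_apply, opFSummand_monomial, map_smul,
      Finsupp.add_apply, Finsupp.single_apply, if_neg hij, if_neg hij.symm, add_zero, smul_smul,
      mul_comm (m i : k)]
    rw [add_right_comm]

end opFSummand

/-- In characteristic `p`, the operator `F` is `p`-nilpotent: `F^p = 0`. -/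
theorem opF_pow_p_eq_zero (k : Type*) [CommRing k] (p : ℕ) (hp : p.Prime) [CharP k p]
    (n : ℕ) :
    opF k n ^ p = 0 := by
  have : ExpChar k p := .prime hp
  have : ExpChar (Module.End k (MvPolynomial (Fin n) k)) p :=
    expChar_of_injective_ringHom (f := (Algebra.lmul k (MvPolynomial (Fin n) k)).toRingHom)
      Algebra.lmul_injective p
  rw [opF_eq_sum_opFSummand,
    Finset.sum_pow_expChar_of_commute p _ _ fun i _ j _ ↦ opFSummand_commute i j]
  simp [opFSummand_pow_eq_zero hp.ne_zero]
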